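/- arXiv:2402.12953 — 6 statements merged into one kernel-verified Lean document; each statement's English description precedes it below -/
import Mathlib

section
/- There exists a BD-model with a ±-probability μ that fails the general import-export condition μ(X ∪ Y) = μ(X) + μ(Y) − μ(X ∩ Y) for some subsets X, Y of the sample space. Concretely, take W = {u₁, u₂} with v⁺(p) = v⁻(p) = ∅ for all variables p, μ({u₁}) = μ({u₂}) = 1/3, μ(∅) = 0, μ(W) = 1; then μ is a ±-probability but μ(W) ≠ μ({u₁}) + μ({u₂}) − μ(∅). -/
inductive BD where
  | var : ℕ → BD
  | neg : BD → BD
  | and : BD → BD → BD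
  | or  : BD → BD → BD

/-- Belnap–Dunn semantics: `(sat vp vn φ w).1` is support of truth,
`(sat vp vn φ w).2` is support of falsity. -/
def sat {W : Type} (vp vn : ℕ → Set W) : BD → W → Prop × Prop
  | .var p, w => (w ∈ vp p, w ∈ vn p)
  | .neg φ, w => ((sat vp vn φ w).2, (sat vp vn φ w).1)
  | .and φ ψ, w => ((sat vp vn φ w).1 ∧ (sat vp vn ψ w).1,
                    (sat vp vn φ w).2 ∨ (sat vp vn ψ w).2)
  | .or φ ψ, w => ((sat vp vn φ w).1 ∨ (sat vp vn ψ w).1,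
                   (sat vp vn φ w).2 ∧ (sat vp vn ψ w).2)

def posExt {W : Type} (vp vn : ℕ → Set W) (φ : BD) : Set W := {w | (sat vp vn φ w).1}
def negExt {W : Type} (vp vn : ℕ → Set W) (φ : BD) : Set W := {w | (sat vp vn φ w).2}


lemma sat_empty {W : Type} (φ : BD) (w : W) :
    ¬(sat (fun _ => (∅ : Set W)) (fun _ => ∅) φ w).1 ∧
    ¬(sat (fun _ => (∅ : Set W)) (fun _ => ∅) φ w).2 := by
  induction φ with
  | var p => simp [sat]
  | neg φ ih => simp [sat, ih.1, ih.2]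
  | and φ ψ ihφ ihψ => simp [sat, ihφ.1, ihφ.2, ihψ.1, ihψ.2]
  | or φ ψ ihφ ihψ => simp [sat, ihφ.1, ihφ.2, ihψ.1, ihψ.2]

lemma posExt_empty {W : Type} (φ : BD) :
    posExt (fun _ => (∅ : Set W)) (fun _ => ∅) φ = ∅ := by
  ext w; simp [posExt, (sat_empty φ w).1]

lemma negExt_empty {W : Type} (φ : BD) :
    negExt (fun _ => (∅ : Set W)) (fun _ => ∅) φ = ∅ := by
  ext w; simp [negExt, (sat_empty φ w).2]

lemma univ_ne_false : (Set.univ : Set Bool) ≠ {false} := by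
  intro h; have : true ∈ ({false} : Set Bool) := h ▸ Set.mem_univ true
  simp at this

lemma univ_ne_true : (Set.univ : Set Bool) ≠ {true} := by
  intro h; have : false ∈ ({true} : Set Bool) := h ▸ Set.mem_univ false
  simp at this


open Classical in
/-- The measure of the counterexample: `μ ∅ = 0`, `μ W = 1`, `μ X = 1/3` otherwise. -/
noncomputable def μ3 : Set Bool → ℝ :=
  fun X => if X = ∅ then 0 else if X = Set.univ then 1 else 1/3

theorem stmt3 :
    μ3 ∅ = 0 ∧ μ3 Set.univ = 1 ∧ μ3 {false} = 1/3 ∧ μ3 {true} = 1/3 ∧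
    (∀ X Y : Set Bool, X ⊆ Y → μ3 X ≤ μ3 Y) ∧
    (∀ φ : BD, μ3 (negExt (fun _ => (∅ : Set Bool)) (fun _ => ∅) φ)
      = μ3 (posExt (fun _ => (∅ : Set Bool)) (fun _ => ∅) (BD.neg φ))) ∧
    (∀ φ χ : BD, μ3 (posExt (fun _ => (∅ : Set Bool)) (fun _ => ∅) (BD.or φ χ)) =
      μ3 (posExt (fun _ => (∅ : Set Bool)) (fun _ => ∅) φ)
      + μ3 (posExt (fun _ => (∅ : Set Bool)) (fun _ => ∅) χ)
      - μ3 (posExt (fun _ => (∅ : Set Bool)) (fun _ => ∅) (BD.and φ χ))) ∧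
    μ3 Set.univ ≠ μ3 {false} + μ3 {true} - μ3 ∅ := by
  have hne : (∅ : Set Bool) ≠ Set.univ := by
    intro h
    have : true ∈ (∅ : Set Bool) := h ▸ Set.mem_univ true
    simp at this
  have hμ0 : μ3 ∅ = 0 := by rw [μ3, if_pos rfl]
  have hμu : μ3 Set.univ = 1 := by rw [μ3, if_neg hne.symm, if_pos rfl]
  have hμf : μ3 {false} = 1/3 := by
    rw [μ3, if_neg (Set.singleton_nonempty false).ne_empty, if_neg univ_ne_false.symm]
  have hμt : μ3 {true} = 1/3 := by
    rw [μ3, if_neg (Set.singleton_nonempty true).ne_empty, if_neg univ_ne_true.symm]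
  refine ⟨hμ0, hμu, hμf, hμt, ?_, ?_, ?_, ?_⟩
  · intro X Y hXY
    by_cases hX : X = ∅
    · subst hX; rw [hμ0]; unfold μ3; split_ifs <;> norm_num
    · by_cases hY : Y = Set.univ
      · subst hY; rw [hμu]; unfold μ3; split_ifs <;> norm_num
      · have hX2 : X ≠ Set.univ := fun h => hY (Set.univ_subset_iff.mp (h ▸ hXY))
        have hY2 : Y ≠ ∅ := fun h => hX (Set.subset_empty_iff.mp (h ▸ hXY))
        rw [μ3, μ3, if_neg hX, if_neg hX2, if_neg hY2, if_neg hY]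
  · intro φ
    rw [negExt_empty, posExt_empty]
  · intro φ χ
    rw [posExt_empty, posExt_empty, posExt_empty, posExt_empty]
    ring
  · rw [hμu, hμf, hμt, hμ0]; norm_num
end

section
/- In the two-valued paraconsistent Łukasiewicz semantics Ł²_(△,→), a formula α is valid (i.e., v₁(α)=1 and v₂(α)=0 for all valuation pairs) if and only if v₁(α)=1 for all valuation pairs. Equivalently: if there is a valuation pair with v₂(α) > 0, then there is a valuation pair with v₁(α) < 1. -/
inductive L2 where
  | var : ℕ → L2
  | neg : L2 → L2
  | snot : L2 → L2
  | delta : L2 → L2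
  | imp : L2 → L2 → L2

open Classical in
/-- Semantics of Ł²_(△,→): `(l2eval v α).1` is support of truth,
`(l2eval v α).2` is support of falsity. -/
noncomputable def l2eval (v : ℕ → ℝ × ℝ) : L2 → ℝ × ℝ
  | .var p => v p
  | .neg φ => ((l2eval v φ).2, (l2eval v φ).1)
  | .snot φ => (1 - (l2eval v φ).1, 1 - (l2eval v φ).2)
  | .delta φ => ((if (l2eval v φ).1 = 1 then 1 else 0),
                 (if (l2eval v φ).2 = 0 then 0 else 1))
  | .imp φ ψ => (min 1 (1 - (l2eval v φ).1 + (l2eval v ψ).1),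
                 max 0 ((l2eval v ψ).2 - (l2eval v φ).2))

/-- A valuation pair takes values in `[0,1]`. -/
def inRange (v : ℕ → ℝ × ℝ) : Prop :=
  ∀ p, (v p).1 ∈ Set.Icc (0:ℝ) 1 ∧ (v p).2 ∈ Set.Icc (0:ℝ) 1

noncomputable def dualv (v : ℕ → ℝ × ℝ) : ℕ → ℝ × ℝ :=
  fun p => (1 - (v p).2, 1 - (v p).1)

lemma star_inRange {v : ℕ → ℝ × ℝ} (h : inRange v) : inRange (dualv v) := by
  intro p
  obtain ⟨⟨h1, h2⟩, ⟨h3, h4⟩⟩ := h p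
  constructor <;> constructor <;> simp [dualv] <;> linarith

lemma star_eval (v : ℕ → ℝ × ℝ) (α : L2) :
    l2eval (dualv v) α = (1 - (l2eval v α).2, 1 - (l2eval v α).1) := by
  induction α with
  | var p => rfl
  | neg φ ih => simp [l2eval, ih]
  | snot φ ih => simp [l2eval, ih]
  | delta φ ih =>
    simp only [l2eval, ih, Prod.mk.injEq]
    constructor
    · by_cases h : (l2eval v φ).2 = 0 <;> simp [h, sub_eq_iff_eq_add]
    · by_cases h : (l2eval v φ).1 = 1
      · simp [h]
      · rw [if_neg (fun hc => h (by linarith)), if_neg h]; ring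
  | imp φ ψ ih1 ih2 =>
    simp only [l2eval, ih1, ih2, Prod.mk.injEq]
    constructor
    · rw [← min_sub_sub_left 1 _ _]; ring_nf
    · rw [← max_sub_sub_left 1 _ _]; norm_num; ring_nf

theorem stmt8 (α : L2) :
    ((∀ v : ℕ → ℝ × ℝ, inRange v → l2eval v α = (1, 0)) ↔
      (∀ v : ℕ → ℝ × ℝ, inRange v → (l2eval v α).1 = 1)) ∧
    ((∃ v : ℕ → ℝ × ℝ, inRange v ∧ 0 < (l2eval v α).2) →
      ∃ v : ℕ → ℝ × ℝ, inRange v ∧ (l2eval v α).1 < 1) := by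
  constructor
  · constructor
    · intro h v hv; rw [h v hv]
    · intro h v hv
      have h1 := h v hv
      have h2 := h (dualv v) (star_inRange hv)
      rw [star_eval] at h2
      simp at h2
      have : (l2eval v α).2 = 0 := by linarith
      exact Prod.ext h1 this
  · rintro ⟨v, hv, hpos⟩
    refine ⟨dualv v, star_inRange hv, ?_⟩
    rw [star_eval]
    simp
    linarith
end

section
/- For every Ł²_(△,→) formula α and valuation pair (v₁, v₂), define (v₁*, v₂*) on variables by v₁*(p) = 1 − v₂(p) and v₂*(p) = 1 − v₁(p). Then for every formula α, v₁*(α) = 1 − v₂(α) and v₂*(α) = 1 − v₁(α). -/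
theorem stmt9 (v : ℕ → ℝ × ℝ) (α : L2) :
    (l2eval (fun p => (1 - (v p).2, 1 - (v p).1)) α).1 = 1 - (l2eval v α).2 ∧
    (l2eval (fun p => (1 - (v p).2, 1 - (v p).1)) α).2 = 1 - (l2eval v α).1 := by
  induction α with
  | var p => exact ⟨rfl, rfl⟩
  | neg φ ih => exact ⟨ih.2, ih.1⟩
  | snot φ ih => simp [l2eval, ih.1, ih.2]
  | delta φ ih =>
    refine ⟨?_, ?_⟩ <;> simp only [l2eval, ih.1, ih.2]
    · split <;> split <;> rename_i h1 h2
      · norm_num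
      · exfalso; apply h2; linarith
      · exfalso; apply h1; linarith
      · norm_num
    · split <;> split <;> rename_i h1 h2
      · norm_num
      · exfalso; apply h2; linarith
      · exfalso; apply h1; linarith
      · norm_num
  | imp φ ψ ihφ ihψ =>
    constructor <;> simp only [l2eval, ihφ.1, ihφ.2, ihψ.1, ihψ.2]
    · rw [show min 1 (1-(1-(l2eval v φ).2)+(1-(l2eval v ψ).2)) = 1 - max 0 ((l2eval v ψ).2-(l2eval v φ).2) by rcases le_total ((l2eval v ψ).2) ((l2eval v φ).2) with h|h <;> [rw [max_eq_left (by linarith), min_eq_left (by linarith)]; rw [max_eq_right (by linarith), min_eq_right (by linarith)]] <;> ring]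
    · rw [show max 0 ((1-(l2eval v ψ).1)-(1-(l2eval v φ).1)) = 1 - min 1 (1-(l2eval v φ).1+(l2eval v ψ).1) by rcases le_total ((l2eval v φ).1) ((l2eval v ψ).1) with h|h <;> [rw [max_eq_left (by linarith), min_eq_left (by linarith)]; rw [max_eq_right (by linarith), min_eq_right (by linarith)]] <;> ring]
end

section
/- Small model property for probabilities of modalized BD formulas: let M = ⟨W, R, v⁺, v⁻, π⟩ be a finite BD probabilistic Kripke model (R an equivalence relation, π a probability measure on W), and let Γ = {□φ₁,…,□φ_k, ◇φ_{k+1},…,◇φ_m} be a finite set of modalized BD formulas. Then there is a submodel M_s = ⟨W_s, R|_{W_s}, v⁺|_{W_s}, v⁻|_{W_s}, π_s⟩ with W_s ⊆ W in which every R-equivalence class has at most 2m+1 elements, and a probability measure π_s on W_s, such that for every σ ∈ Γ, π(|σ|⁺) = π_s(|σ|⁺) and π(|σ|⁻) = π_s(|σ|⁻). -/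
inductive MBD where
  | var : ℕ → MBD
  | neg : MBD → MBD
  | and : MBD → MBD → MBD
  | or  : MBD → MBD → MBD
  | box : MBD → MBD
  | dia : MBD → MBD

/-- Modal Belnap–Dunn semantics: `.1` = support of truth, `.2` = support of falsity. -/
def msat {W : Type} (R : W → W → Prop) (vp vn : ℕ → Set W) : MBD → W → Prop × Prop
  | .var p, w => (w ∈ vp p, w ∈ vn p)
  | .neg φ, w => ((msat R vp vn φ w).2, (msat R vp vn φ w).1)
  | .and φ ψ, w => ((msat R vp vn φ w).1 ∧ (msat R vp vn ψ w).1,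
                    (msat R vp vn φ w).2 ∨ (msat R vp vn ψ w).2)
  | .or φ ψ, w => ((msat R vp vn φ w).1 ∨ (msat R vp vn ψ w).1,
                   (msat R vp vn φ w).2 ∧ (msat R vp vn ψ w).2)
  | .box φ, w => ((∀ w', R w w' → (msat R vp vn φ w').1),
                  (∃ w', R w w' ∧ (msat R vp vn φ w').2))
  | .dia φ, w => ((∃ w', R w w' ∧ (msat R vp vn φ w').1),
                  (∀ w', R w w' → (msat R vp vn φ w').2))

/-- A modality-free (purely propositional) BD formula. -/
def propositional : MBD → Prop
  | .var _ => True
  | .neg φ => propositional φ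
  | .and φ ψ => propositional φ ∧ propositional ψ
  | .or φ ψ => propositional φ ∧ propositional ψ
  | .box _ => False
  | .dia _ => False

open scoped Classical

lemma msat_sub {W : Type} (R : W → W → Prop) (vp vn : ℕ → Set W) (Ws : Set W)
    (φ : MBD) (h : propositional φ) (w : ↥Ws) :
    ((msat (fun a b : ↥Ws => R ↑a ↑b) (fun p => {w : ↥Ws | ↑w ∈ vp p})
      (fun p => {w : ↥Ws | ↑w ∈ vn p}) φ w).1 ↔ (msat R vp vn φ ↑w).1) ∧
    ((msat (fun a b : ↥Ws => R ↑a ↑b) (fun p => {w : ↥Ws | ↑w ∈ vp p})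
      (fun p => {w : ↥Ws | ↑w ∈ vn p}) φ w).2 ↔ (msat R vp vn φ ↑w).2) := by
  induction φ with
  | var p => simp [msat]
  | neg φ ih =>
      simp only [propositional] at h
      simpa [msat] using ⟨(ih h).2, (ih h).1⟩
  | and φ ψ ihφ ihψ =>
      obtain ⟨h1, h2⟩ := h
      simp only [msat]
      exact ⟨and_congr (ihφ h1).1 (ihψ h2).1, or_congr (ihφ h1).2 (ihψ h2).2⟩
  | or φ ψ ihφ ihψ =>
      obtain ⟨h1, h2⟩ := h
      simp only [msat]
      exact ⟨or_congr (ihφ h1).1 (ihψ h2).1, and_congr (ihφ h1).2 (ihψ h2).2⟩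
  | box φ ih => exact h.elim
  | dia φ ih => exact h.elim

noncomputable def repc {W : Type} (R : W → W → Prop) (hR : Equivalence R) (w : W) : W :=
  (@Quotient.mk W ⟨R, hR⟩ w).out

lemma repc_rel {W : Type} (R : W → W → Prop) (hR : Equivalence R) (w : W) :
    R w (repc R hR w) :=
  hR.symm (@Quotient.exact W ⟨R, hR⟩ _ _ (Quotient.out_eq _))

lemma repc_eq {W : Type} (R : W → W → Prop) (hR : Equivalence R) {w w' : W}
    (h : R w w') : repc R hR w = repc R hR w' :=
  congrArg Quotient.out (@Quotient.sound W ⟨R, hR⟩ _ _ h)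

noncomputable def wit {W : Type} (R : W → W → Prop) (hR : Equivalence R)
    (p : W → Prop) (w : W) : W :=
  if h : ∃ x, R (repc R hR w) x ∧ p x then h.choose else repc R hR w

lemma wit_rel {W : Type} (R : W → W → Prop) (hR : Equivalence R)
    (p : W → Prop) (w : W) : R w (wit R hR p w) := by
  unfold wit
  split
  · next h => exact hR.trans (repc_rel R hR w) h.choose_spec.1
  · exact repc_rel R hR w

lemma wit_prop {W : Type} (R : W → W → Prop) (hR : Equivalence R)
    (p : W → Prop) (w : W) (h : ∃ x, R w x ∧ p x) : p (wit R hR p w) := by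
  have h' : ∃ x, R (repc R hR w) x ∧ p x := by
    obtain ⟨x, hx1, hx2⟩ := h
    exact ⟨x, hR.trans (hR.symm (repc_rel R hR w)) hx1, hx2⟩
  unfold wit
  rw [dif_pos h']
  exact h'.choose_spec.2

lemma wit_eq {W : Type} (R : W → W → Prop) (hR : Equivalence R)
    (p : W → Prop) {w w' : W} (h : R w w') : wit R hR p w = wit R hR p w' := by
  unfold wit
  rw [repc_eq R hR h]

lemma equiv_forall {W : Type} (R : W → W → Prop) (hR : Equivalence R) (Ws : Set W)
    (q : W → Prop) (x : W)
    (hwit : (∃ y, R x y ∧ ¬ q y) → ∃ u, u ∈ Ws ∧ R x u ∧ ¬ q u) :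
    ((∀ y, R x y → q y) ↔ ∀ u : ↥Ws, R (repc R hR x) ↑u → q ↑u) := by
  constructor
  · intro h u hu
    exact h _ (hR.trans (repc_rel R hR x) hu)
  · intro h y hy
    by_contra hq
    obtain ⟨u, hu, hr, hnq⟩ := hwit ⟨y, hy, hq⟩
    exact hnq (h ⟨u, hu⟩ (hR.trans (hR.symm (repc_rel R hR x)) hr))

lemma equiv_exists {W : Type} (R : W → W → Prop) (hR : Equivalence R) (Ws : Set W)
    (q : W → Prop) (x : W)
    (hwit : (∃ y, R x y ∧ q y) → ∃ u, u ∈ Ws ∧ R x u ∧ q u) :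
    ((∃ y, R x y ∧ q y) ↔ ∃ u : ↥Ws, R (repc R hR x) ↑u ∧ q ↑u) := by
  constructor
  · intro h
    obtain ⟨u, hu, hr, hq⟩ := hwit h
    exact ⟨⟨u, hu⟩, hR.trans (hR.symm (repc_rel R hR x)) hr, hq⟩
  · rintro ⟨u, hr, hq⟩
    exact ⟨↑u, hR.trans (repc_rel R hR x) hr, hq⟩

theorem stmt15 {W : Type} [Fintype W] (R : W → W → Prop) (hR : Equivalence R)
    (vp vn : ℕ → Set W) (π : Set W → ℝ)
    (hadd : ∀ A B : Set W, Disjoint A B → π (A ∪ B) = π A + π B)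
    (hpos : ∀ A : Set W, 0 ≤ π A) (huniv : π Set.univ = 1)
    (m k : ℕ) (hk : k ≤ m) (φ : Fin m → MBD) (hprop : ∀ i, propositional (φ i)) :
    ∃ (Ws : Set W) (πs : Set ↥Ws → ℝ),
      (∀ A B : Set ↥Ws, Disjoint A B → πs (A ∪ B) = πs A + πs B) ∧
      (∀ A : Set ↥Ws, 0 ≤ πs A) ∧ πs Set.univ = 1 ∧
      (∀ w : ↥Ws, Set.ncard {x : ↥Ws | R ↑w ↑x} ≤ 2 * m + 1) ∧
      (∀ i : Fin m,
        let σ : MBD := if (i : ℕ) < k then MBD.box (φ i) else MBD.dia (φ i)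
        π {w | (msat R vp vn σ w).1} =
          πs {w : ↥Ws | (msat (fun a b : ↥Ws => R ↑a ↑b)
            (fun p => {w : ↥Ws | ↑w ∈ vp p}) (fun p => {w : ↥Ws | ↑w ∈ vn p}) σ w).1} ∧
        π {w | (msat R vp vn σ w).2} =
          πs {w : ↥Ws | (msat (fun a b : ↥Ws => R ↑a ↑b)
            (fun p => {w : ↥Ws | ↑w ∈ vp p}) (fun p => {w : ↥Ws | ↑w ∈ vn p}) σ w).2}) := by
  classical
  set pA : Fin m → W → Prop := fun i x =>
    if (i : ℕ) < k then ¬(msat R vp vn (φ i) x).1 else (msat R vp vn (φ i) x).1 with hpA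
  set pB : Fin m → W → Prop := fun i x =>
    if (i : ℕ) < k then (msat R vp vn (φ i) x).2 else ¬(msat R vp vn (φ i) x).2 with hpB
  set Ws : Set W := Set.range (repc R hR) ∪
    ⋃ i : Fin m, (Set.range (wit R hR (pA i)) ∪ Set.range (wit R hR (pB i))) with hWs
  have hrep_mem : ∀ x, repc R hR x ∈ Ws := fun x => Or.inl ⟨x, rfl⟩
  have hwitA_mem : ∀ (i : Fin m) (x : W), wit R hR (pA i) x ∈ Ws := fun i x =>
    Or.inr (Set.mem_iUnion.2 ⟨i, Or.inl ⟨x, rfl⟩⟩)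
  have hwitB_mem : ∀ (i : Fin m) (x : W), wit R hR (pB i) x ∈ Ws := fun i x =>
    Or.inr (Set.mem_iUnion.2 ⟨i, Or.inr ⟨x, rfl⟩⟩)
  set g : W → ↥Ws := fun x => ⟨repc R hR x, hrep_mem x⟩ with hg
  have hgx : ∀ x : W, ((g x : ↥Ws) : W) = repc R hR x := fun x => rfl
  refine ⟨Ws, fun A => π (g ⁻¹' A), ?_, fun A => hpos _, ?_, ?_, ?_⟩
  · intro A B hAB
    dsimp only
    rw [Set.preimage_union]
    exact hadd _ _ (hAB.preimage g)
  · dsimp only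
    rw [Set.preimage_univ]; exact huniv
  · -- cardinality bound
    intro w
    rw [← Set.ncard_image_of_injective {x : ↥Ws | R ↑w ↑x} Subtype.val_injective]
    have hsub : Subtype.val '' {x : ↥Ws | R ↑w ↑x} ⊆
        insert (repc R hR ↑w)
          ((Set.range fun i : Fin m => wit R hR (pA i) ↑w) ∪
           (Set.range fun i : Fin m => wit R hR (pB i) ↑w)) := by
      rintro x ⟨⟨x, hxWs⟩, hRx, rfl⟩
      simp only [Set.mem_setOf_eq] at hRx
      rcases hxWs with ⟨w', rfl⟩ | hx
      · exact Or.inl (repc_eq R hR (hR.symm (hR.trans hRx (hR.symm (repc_rel R hR w')))))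
      · obtain ⟨i, hx⟩ := Set.mem_iUnion.1 hx
        rcases hx with ⟨w', rfl⟩ | ⟨w', rfl⟩
        · exact Or.inr (Or.inl ⟨i,
            (wit_eq R hR (pA i) (hR.symm (hR.trans hRx (hR.symm (wit_rel R hR (pA i) w'))))).symm⟩)
        · exact Or.inr (Or.inr ⟨i,
            (wit_eq R hR (pB i) (hR.symm (hR.trans hRx (hR.symm (wit_rel R hR (pB i) w'))))).symm⟩)
    have hrA : (Set.range fun i : Fin m => wit R hR (pA i) ↑w).ncard ≤ m := by
      rw [← Set.image_univ]
      calc (Set.image _ Set.univ).ncard ≤ (Set.univ : Set (Fin m)).ncard :=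
            Set.ncard_image_le Set.finite_univ
        _ = m := by simp [Set.ncard_univ]
    have hrB : (Set.range fun i : Fin m => wit R hR (pB i) ↑w).ncard ≤ m := by
      rw [← Set.image_univ]
      calc (Set.image _ Set.univ).ncard ≤ (Set.univ : Set (Fin m)).ncard :=
            Set.ncard_image_le Set.finite_univ
        _ = m := by simp [Set.ncard_univ]
    calc (Subtype.val '' {x : ↥Ws | R ↑w ↑x}).ncard
        ≤ _ := Set.ncard_le_ncard hsub (Set.toFinite _)
      _ ≤ _ + 1 := Set.ncard_insert_le _ _
      _ ≤ ((Set.range fun i : Fin m => wit R hR (pA i) ↑w).ncard +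
            (Set.range fun i : Fin m => wit R hR (pB i) ↑w).ncard) + 1 := by
            exact Nat.add_le_add_right (Set.ncard_union_le _ _) 1
      _ ≤ 2 * m + 1 := by omega
  · intro i σ
    by_cases hik : (i : ℕ) < k
    · have hσ : σ = MBD.box (φ i) := if_pos hik
      rw [hσ]
      have hAiff : ∀ x, pA i x ↔ ¬(msat R vp vn (φ i) x).1 := fun x => by
        simp only [hpA, if_pos hik]
      have hBiff : ∀ x, pB i x ↔ (msat R vp vn (φ i) x).2 := fun x => by
        simp only [hpB, if_pos hik]
      constructor
      · refine congrArg π (Set.ext fun x => ?_)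
        simp only [Set.mem_setOf_eq, Set.mem_preimage, msat]
        constructor
        · intro h u hu
          exact (msat_sub R vp vn Ws (φ i) (hprop i) u).1.mpr
            (h ↑u (hR.trans (repc_rel R hR x) hu))
        · intro h y hy
          by_contra hq
          have hw : pA i (wit R hR (pA i) x) :=
            wit_prop R hR (pA i) x ⟨y, hy, (hAiff y).mpr hq⟩
          have := h ⟨wit R hR (pA i) x, hwitA_mem i x⟩
            (hR.trans (hR.symm (repc_rel R hR x)) (wit_rel R hR (pA i) x))
          exact (hAiff _).mp hw ((msat_sub R vp vn Ws (φ i) (hprop i) _).1.mp this)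
      · refine congrArg π (Set.ext fun x => ?_)
        simp only [Set.mem_setOf_eq, Set.mem_preimage, msat]
        constructor
        · rintro ⟨y, hy, hq⟩
          have hw : pB i (wit R hR (pB i) x) :=
            wit_prop R hR (pB i) x ⟨y, hy, (hBiff y).mpr hq⟩
          exact ⟨⟨wit R hR (pB i) x, hwitB_mem i x⟩,
            hR.trans (hR.symm (repc_rel R hR x)) (wit_rel R hR (pB i) x),
            (msat_sub R vp vn Ws (φ i) (hprop i) _).2.mpr ((hBiff _).mp hw)⟩
        · rintro ⟨u, hu, hq⟩
          exact ⟨↑u, hR.trans (repc_rel R hR x) hu,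
            (msat_sub R vp vn Ws (φ i) (hprop i) u).2.mp hq⟩
    · have hσ : σ = MBD.dia (φ i) := if_neg hik
      rw [hσ]
      have hAiff : ∀ x, pA i x ↔ (msat R vp vn (φ i) x).1 := fun x => by
        simp only [hpA, if_neg hik]
      have hBiff : ∀ x, pB i x ↔ ¬(msat R vp vn (φ i) x).2 := fun x => by
        simp only [hpB, if_neg hik]
      constructor
      · refine congrArg π (Set.ext fun x => ?_)
        simp only [Set.mem_setOf_eq, Set.mem_preimage, msat]
        constructor
        · rintro ⟨y, hy, hq⟩
          have hw : pA i (wit R hR (pA i) x) :=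
            wit_prop R hR (pA i) x ⟨y, hy, (hAiff y).mpr hq⟩
          exact ⟨⟨wit R hR (pA i) x, hwitA_mem i x⟩,
            hR.trans (hR.symm (repc_rel R hR x)) (wit_rel R hR (pA i) x),
            (msat_sub R vp vn Ws (φ i) (hprop i) _).1.mpr ((hAiff _).mp hw)⟩
        · rintro ⟨u, hu, hq⟩
          exact ⟨↑u, hR.trans (repc_rel R hR x) hu,
            (msat_sub R vp vn Ws (φ i) (hprop i) u).1.mp hq⟩
      · refine congrArg π (Set.ext fun x => ?_)
        simp only [Set.mem_setOf_eq, Set.mem_preimage, msat]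
        constructor
        · intro h u hu
          exact (msat_sub R vp vn Ws (φ i) (hprop i) u).2.mpr
            (h ↑u (hR.trans (repc_rel R hR x) hu))
        · intro h y hy
          by_contra hq
          have hw : pB i (wit R hR (pB i) x) :=
            wit_prop R hR (pB i) x ⟨y, hy, (hBiff y).mpr hq⟩
          have := h ⟨wit R hR (pB i) x, hwitB_mem i x⟩
            (hR.trans (hR.symm (repc_rel R hR x)) (wit_rel R hR (pB i) x))
          exact (hBiff _).mp hw ((msat_sub R vp vn Ws (φ i) (hprop i) _).2.mp this)
end

section
/- The translation from 4-probability modal atoms to ±-probability formulas is semantically correct: in any BD-model equipped with a classical probability measure μ, the value μ(|φ|ᵇ) equals max(0, μ(|φ|⁺) − μ(|φ∧¬φ|⁺)) — in fact μ(|φ|ᵇ) = μ(|φ|⁺) − μ(|φ∧¬φ|⁺); similarly μ(|φ|ᵈ) = μ(|¬φ|⁺) − μ(|φ∧¬φ|⁺); μ(|φ|ᶜ) = μ(|φ∧¬φ|⁺); and μ(|φ|ᵘ) = 1 − μ(|φ∨¬φ|⁺). -/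
def bExt {W : Type} (vp vn : ℕ → Set W) (φ : BD) : Set W := posExt vp vn φ \ negExt vp vn φ
def dExt {W : Type} (vp vn : ℕ → Set W) (φ : BD) : Set W := negExt vp vn φ \ posExt vp vn φ
def cExt {W : Type} (vp vn : ℕ → Set W) (φ : BD) : Set W := posExt vp vn φ ∩ negExt vp vn φ
def uExt {W : Type} (vp vn : ℕ → Set W) (φ : BD) : Set W := (posExt vp vn φ ∪ negExt vp vn φ)ᶜ

theorem stmt18 {W : Type} (vp vn : ℕ → Set W) (μ : Set W → ℝ)
    (hadd : ∀ A B : Set W, Disjoint A B → μ (A ∪ B) = μ A + μ B)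
    (h0 : μ ∅ = 0) (h1 : μ Set.univ = 1)
    (hrange : ∀ X : Set W, 0 ≤ μ X ∧ μ X ≤ 1) (φ : BD) :
    μ (bExt vp vn φ) = max 0 (μ (posExt vp vn φ) - μ (posExt vp vn (BD.and φ (BD.neg φ)))) ∧
    μ (bExt vp vn φ) = μ (posExt vp vn φ) - μ (posExt vp vn (BD.and φ (BD.neg φ))) ∧
    μ (dExt vp vn φ) = μ (posExt vp vn (BD.neg φ)) - μ (posExt vp vn (BD.and φ (BD.neg φ))) ∧
    μ (cExt vp vn φ) = μ (posExt vp vn (BD.and φ (BD.neg φ))) ∧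
    μ (uExt vp vn φ) = 1 - μ (posExt vp vn (BD.or φ (BD.neg φ))) := by
  have hc : posExt vp vn (BD.and φ (BD.neg φ)) = cExt vp vn φ := by
    ext w; simp [posExt, cExt, negExt, sat]
  have hu : posExt vp vn (BD.or φ (BD.neg φ)) = posExt vp vn φ ∪ negExt vp vn φ := by
    ext w; simp [posExt, negExt, sat, Set.mem_union]
  have hn : posExt vp vn (BD.neg φ) = negExt vp vn φ := by
    ext w; simp [posExt, negExt, sat]
  have hbc : bExt vp vn φ ∪ cExt vp vn φ = posExt vp vn φ := by
    ext w; by_cases h : w ∈ negExt vp vn φ <;>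
      simp [bExt, cExt, Set.mem_union, Set.mem_diff, Set.mem_inter_iff, h] <;> tauto
  have hdc : dExt vp vn φ ∪ cExt vp vn φ = negExt vp vn φ := by
    ext w; by_cases h : w ∈ posExt vp vn φ <;>
      simp [dExt, cExt, Set.mem_union, Set.mem_diff, Set.mem_inter_iff, h] <;> tauto
  have hb : μ (posExt vp vn φ) = μ (bExt vp vn φ) + μ (cExt vp vn φ) := by
    rw [← hbc]; exact hadd _ _ (by
      rw [Set.disjoint_left]; intro w hw hw2; exact hw.2 hw2.2)
  have hd : μ (negExt vp vn φ) = μ (dExt vp vn φ) + μ (cExt vp vn φ) := by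
    rw [← hdc]; exact hadd _ _ (by
      rw [Set.disjoint_left]; intro w hw hw2; exact hw.2 hw2.1)
  have hU : μ ((posExt vp vn φ ∪ negExt vp vn φ) ∪ uExt vp vn φ) = 1 := by
    rw [show (posExt vp vn φ ∪ negExt vp vn φ) ∪ uExt vp vn φ = Set.univ by
      rw [uExt]; exact Set.union_compl_self _]; exact h1
  have huu : μ (uExt vp vn φ) = 1 - μ (posExt vp vn (BD.or φ (BD.neg φ))) := by
    rw [hu]
    have := hadd (posExt vp vn φ ∪ negExt vp vn φ) (uExt vp vn φ)
      (by rw [uExt]; exact disjoint_compl_right)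
    rw [this] at hU; linarith
  refine ⟨?_, by rw [hc]; linarith, by rw [hc, hn]; linarith, by rw [hc], huu⟩
  rw [hc]
  have := (hrange (bExt vp vn φ)).1
  rw [max_eq_right (by linarith)]; linarith
end

section
/- Any finite set of finitely many coherent probability constraints has a small support solution: if a system consisting of r linear inequalities over variables (u_v)_{v ∈ V} (V finite) together with Σ_v u_v = 1 and n equations Σ_v a_{i,v} u_v = z_i (coefficients a_{i,v} ∈ {0,1}) has a nonnegative solution, then it has a nonnegative solution in which at most r + n + 1 of the u_v are nonzero. -/
/-!
Conic Carathéodory. The normalization and the r + n constraint rows are r + n + 1 linear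
functionals, and any nonnegative `w` on which they agree with the given solution is again a
solution. While the support of `u` has more than r + n + 1 points, some nonzero `d` supported
there is killed by every functional, and moving from `u` along `±d` until a first coordinate
reaches zero keeps `u` nonnegative and shrinks its support.
-/

open Function Matrix

theorem Matrix.exists_ne_zero_mulVec_eq_zero_support_subset {K ι V : Type*} [Field K]
    [Fintype ι] [Fintype V] (A : Matrix ι V K) {s : Set V} (hs : Fintype.card ι < s.ncard) :
    ∃ d : V → K, d ≠ 0 ∧ A *ᵥ d = 0 ∧ support d ⊆ s := by
  classical
  let L : (V → K) →ₗ[K] (ι → K) × (↥sᶜ → K) :=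
    A.mulVecLin.prod (LinearMap.funLeft K K Subtype.val)
  have hdim : Module.finrank K ((ι → K) × (↥sᶜ → K)) < Module.finrank K (V → K) := by
    simp only [Module.finrank_prod, Module.finrank_pi, ← Nat.card_eq_fintype_card (α := ↥sᶜ),
      ← Nat.card_eq_fintype_card (α := V), Nat.card_coe_set_eq, ← Set.ncard_add_ncard_compl s]
    omega
  obtain ⟨d, hdL, hd0⟩ :=
    (Submodule.ne_bot_iff _).mp (LinearMap.ker_ne_bot_of_finrank_lt (f := L) hdim)
  obtain ⟨hAd, hds⟩ := Prod.ext_iff.mp (LinearMap.mem_ker.mp hdL)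
  refine ⟨d, hd0, hAd, fun v hv => ?_⟩
  by_contra hvs
  exact hv (congrFun hds ⟨v, hvs⟩)

theorem exists_nonneg_add_smul_support_ssubset {K V : Type*}
    [Field K] [LinearOrder K] [IsStrictOrderedRing K] [Finite V] {u d : V → K}
    (hu : 0 ≤ u) (hneg : ∃ v, d v < 0) (hdu : support d ⊆ support u) :
    ∃ t : K, 0 ≤ u + t • d ∧ support (u + t • d) ⊂ support u := by
  obtain ⟨v₀, hv₀, hmin⟩ := Set.exists_min_image {v | d v < 0} (fun v => u v / -d v)
    (Set.toFinite _) hneg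
  refine ⟨u v₀ / -d v₀, fun v => ?_, ?_⟩
  · have ht : 0 ≤ u v₀ / -d v₀ := div_nonneg (hu v₀) (neg_nonneg.mpr hv₀.le)
    simp only [Pi.zero_apply, Pi.add_apply, Pi.smul_apply, smul_eq_mul]
    rcases lt_or_ge (d v) 0 with hv | hv
    · have := (le_div_iff₀ (neg_pos.mpr hv)).mp (hmin v hv)
      linarith
    · exact add_nonneg (hu v) (mul_nonneg ht hv)
  · have hsub : support (u + (u v₀ / -d v₀) • d) ⊆ support u := fun v hv huv => by
      have hdv : d v = 0 := notMem_support.mp fun h => hdu h huv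
      simp [huv, hdv] at hv
    refine (Set.ssubset_iff_of_subset hsub).mpr ⟨v₀, hdu hv₀.ne, ?_⟩
    have : d v₀ ≠ 0 := hv₀.ne
    simp only [mem_support, Pi.add_apply, Pi.smul_apply, smul_eq_mul, not_not]
    field_simp
    ring

theorem Matrix.exists_nonneg_mulVec_eq_ncard_support_le {K ι V : Type*}
    [Field K] [LinearOrder K] [IsStrictOrderedRing K] [Fintype ι] [Fintype V]
    (A : Matrix ι V K) {u : V → K} (hu : 0 ≤ u) :
    ∃ w : V → K, 0 ≤ w ∧ A *ᵥ w = A *ᵥ u ∧ (support w).ncard ≤ Fintype.card ι := by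
  induction hk : (support u).ncard using Nat.strong_induction_on generalizing u with
  | _ k ih =>
    by_cases hsmall : k ≤ Fintype.card ι
    · exact ⟨u, hu, rfl, hk ▸ hsmall⟩
    obtain ⟨d, hd0, hAd, hdu⟩ :=
      A.exists_ne_zero_mulVec_eq_zero_support_subset (s := support u) (by omega)
    have hdir : ∃ d' : V → K,
        (∃ v, d' v < 0) ∧ A *ᵥ d' = 0 ∧ support d' ⊆ support u := by
      obtain ⟨v, hv⟩ := Function.ne_iff.mp hd0
      rcases hv.lt_or_gt with hv | hv
      · exact ⟨d, ⟨v, hv⟩, hAd, hdu⟩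
      · exact ⟨-d, ⟨v, neg_neg_of_pos hv⟩, by rw [mulVec_neg, hAd, neg_zero],
          support_neg d ▸ hdu⟩
    obtain ⟨d', hd'neg, hAd', hd'u⟩ := hdir
    obtain ⟨t, hut, hsupp⟩ := exists_nonneg_add_smul_support_ssubset hu hd'neg hd'u
    obtain ⟨w, hw, hAw, hcard⟩ := ih _ (hk ▸ Set.ncard_lt_ncard hsupp) hut rfl
    refine ⟨w, hw, ?_, hcard⟩
    rw [hAw, mulVec_add, mulVec_smul, hAd', smul_zero, add_zero]

theorem stmt19_general {V : Type} [Fintype V] (r n : ℕ)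
    (b : Fin r → V → ℝ) (c : Fin r → ℝ)
    (a : Fin n → V → ℝ) (z : Fin n → ℝ)
    (hsol : ∃ u : V → ℝ, (∀ v, 0 ≤ u v) ∧ (∑ v, u v) = 1 ∧
      (∀ i, (∑ v, b i v * u v) ≤ c i) ∧ (∀ i, (∑ v, a i v * u v) = z i)) :
    ∃ u : V → ℝ, (∀ v, 0 ≤ u v) ∧ (∑ v, u v) = 1 ∧
      (∀ i, (∑ v, b i v * u v) ≤ c i) ∧ (∀ i, (∑ v, a i v * u v) = z i) ∧
      Set.ncard {v | u v ≠ 0} ≤ r + n + 1 := by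
  obtain ⟨u, hu, hsum, hb, ha⟩ := hsol
  let A : Matrix (Fin r ⊕ Fin n ⊕ Unit) V ℝ := Sum.elim b (Sum.elim a fun _ _ => 1)
  obtain ⟨w, hw, hAw, hcard⟩ := A.exists_nonneg_mulVec_eq_ncard_support_le hu
  have hrow : ∀ k, ∑ v, A k v * w v = ∑ v, A k v * u v := fun k => congrFun hAw k
  refine ⟨w, hw, ?_, fun i => (hrow (.inl i)).trans_le (hb i),
    fun i => (hrow (.inr (.inl i))).trans (ha i), ?_⟩
  · simpa [A, hsum] using hrow (.inr (.inr ()))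
  · simpa [add_assoc, support] using hcard

theorem stmt19 {V : Type} [Fintype V] (r n : ℕ)
    (b : Fin r → V → ℝ) (c : Fin r → ℝ)
    (a : Fin n → V → ℝ) (ha : ∀ i v, a i v = 0 ∨ a i v = 1) (z : Fin n → ℝ)
    (hsol : ∃ u : V → ℝ, (∀ v, 0 ≤ u v) ∧ (∑ v, u v) = 1 ∧
      (∀ i, (∑ v, b i v * u v) ≤ c i) ∧ (∀ i, (∑ v, a i v * u v) = z i)) :
    ∃ u : V → ℝ, (∀ v, 0 ≤ u v) ∧ (∑ v, u v) = 1 ∧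
      (∀ i, (∑ v, b i v * u v) ≤ c i) ∧ (∀ i, (∑ v, a i v * u v) = z i) ∧
      Set.ncard {v | u v ≠ 0} ≤ r + n + 1 :=
  stmt19_general r n b c a z hsol
end
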